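/- Under the same setup, the functional Λ is locally Lipschitz in the sets: there exists a constant C < ∞ depending only on the maps L_i such that for arbitrary 4-tuples E, E' of finite-measure subsets of ℝ², |Λ(E) − Λ(E')| ≤ C · (max_i |E_i| + max_j |E'_j|) · max_k |E_k Δ E'_k|. -/

import Mathlib

/-!
`Λ(E)` is the measure of `S(E) = ⋂ᵢ Lᵢ⁻¹(Eᵢ)`, so `|Λ(E) - Λ(E')| ≤ |S(E) ∆ S(E')|`. A point of
`S(E) ∆ S(E')` lies in `L_k⁻¹(E_k ∆ E'_k)` for some `k`, and also in `L_{k+1}⁻¹(E_{k+1} ∪ E'_{k+1})`.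
By nondegeneracy `z ↦ (L_k z, L_{k+1} z)` is a linear bijection `ℝ⁴ → ℝ² × ℝ²`, so
`|L_k⁻¹(A) ∩ L_{k+1}⁻¹(B)| = |det|⁻¹ |A| |B|`, and summing over `k` gives the bound.
-/

open MeasureTheory Set

noncomputable section

abbrev R2 := ℝ × ℝ
abbrev R4 := (ℝ × ℝ) × ℝ × ℝ

def Lam (L : Fin 4 → R4 →ₗ[ℝ] R2) (E : Fin 4 → Set R2) : ℝ :=
  ∫ z : R4, ∏ i, (E i).indicator (fun _ => (1 : ℝ)) (L i z)

open scoped symmDiff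

theorem symmDiff_iInter_subset_iUnion {ι α : Type*} (s t : ι → Set α) (j : ι → ι) :
    (⋂ i, s i) ∆ (⋂ i, t i) ⊆ ⋃ i, (s i ∆ t i) ∩ (s (j i) ∪ t (j i)) := by
  intro z hz
  simp only [mem_symmDiff, mem_iInter, not_forall, mem_iUnion, mem_inter_iff, mem_union] at hz ⊢
  rcases hz with ⟨hs, k, hk⟩ | ⟨ht, k, hk⟩
  · exact ⟨k, Or.inl ⟨hs k, hk⟩, Or.inl (hs (j k))⟩
  · exact ⟨k, Or.inr ⟨ht k, hk⟩, Or.inr (ht (j k))⟩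

section PairPreimage

variable {F : Type*} [NormedAddCommGroup F] [NormedSpace ℝ F] [FiniteDimensional ℝ F]
  [MeasureSpace F] [BorelSpace F] [(volume : Measure F).IsAddHaarMeasure]
  {f g : F × F →ₗ[ℝ] F}

theorem volume_preimage_inter_preimage (hfg : Function.Bijective fun z => (f z, g z))
    (A B : Set F) :
    volume (f ⁻¹' A ∩ g ⁻¹' B) =
      ENNReal.ofReal |(LinearMap.det (f.prod g))⁻¹| * (volume A * volume B) := by
  have hdet : LinearMap.det (f.prod g) ≠ 0 :=
    (LinearEquiv.ofBijective (f.prod g) hfg).isUnit_det'.ne_zero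
  rw [← mk_preimage_prod, Measure.volume_eq_prod, ← Measure.prod_prod]
  exact Measure.addHaar_preimage_linearMap _ hdet _

theorem measureReal_preimage_inter_preimage (hfg : Function.Bijective fun z => (f z, g z))
    (A B : Set F) :
    volume.real (f ⁻¹' A ∩ g ⁻¹' B) =
      |(LinearMap.det (f.prod g))⁻¹| * (volume.real A * volume.real B) := by
  simp only [measureReal_def, volume_preimage_inter_preimage hfg, ENNReal.toReal_mul,
    ENNReal.toReal_ofReal (abs_nonneg _)]

theorem volume_preimage_inter_preimage_lt_top (hfg : Function.Bijective fun z => (f z, g z))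
    {A B : Set F} (hA : volume A < ⊤) (hB : volume B < ⊤) :
    volume (f ⁻¹' A ∩ g ⁻¹' B) < ⊤ := by
  rw [volume_preimage_inter_preimage hfg]
  exact ENNReal.mul_lt_top ENNReal.ofReal_lt_top (ENNReal.mul_lt_top hA hB)

theorem volume_iInter_preimage_lt_top {ι : Type*} {L : ι → F × F →ₗ[ℝ] F} {E : ι → Set F}
    {i j : ι} (hij : Function.Bijective fun z => (L i z, L j z))
    (hi : volume (E i) < ⊤) (hj : volume (E j) < ⊤) :
    volume (⋂ k, L k ⁻¹' E k) < ⊤ :=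
  (measure_mono (subset_inter (iInter_subset _ i) (iInter_subset _ j))).trans_lt
    (volume_preimage_inter_preimage_lt_top hij hi hj)

theorem measureReal_symmDiff_iInter_preimage_le {ι : Type*} [Fintype ι]
    {L : ι → F × F →ₗ[ℝ] F} (j : ι → ι) (hL : ∀ k, Function.Bijective fun z => (L k z, L (j k) z))
    {E E' : ι → Set F} (hE : ∀ k, volume (E k) < ⊤) (hE' : ∀ k, volume (E' k) < ⊤) :
    volume.real ((⋂ k, L k ⁻¹' E k) ∆ (⋂ k, L k ⁻¹' E' k)) ≤
      ∑ k, |(LinearMap.det ((L k).prod (L (j k))))⁻¹| *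
        (volume.real (E k ∆ E' k) * (volume.real (E (j k)) + volume.real (E' (j k)))) := by
  set piece := fun k => L k ⁻¹' (E k ∆ E' k) ∩ L (j k) ⁻¹' (E (j k) ∪ E' (j k))
  have hpiece : ∀ k, volume (piece k) < ⊤ := fun k =>
    volume_preimage_inter_preimage_lt_top (hL k)
      ((measure_mono symmDiff_subset_union).trans_lt (measure_union_lt_top (hE k) (hE' k)))
      (measure_union_lt_top (hE (j k)) (hE' (j k)))
  have hcover : (⋂ k, L k ⁻¹' E k) ∆ (⋂ k, L k ⁻¹' E' k) ⊆ ⋃ k, piece k := by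
    simpa only [piece, preimage_symmDiff, preimage_union] using
      symmDiff_iInter_subset_iUnion (fun k => L k ⁻¹' E k) (fun k => L k ⁻¹' E' k) j
  calc _ ≤ volume.real (⋃ k, piece k) :=
        measureReal_mono hcover ((measure_iUnion_fintype_le _ _).trans_lt
          (ENNReal.sum_lt_top.2 fun k _ => hpiece k)).ne
    _ ≤ ∑ k, volume.real (piece k) := measureReal_iUnion_fintype_le _
    _ ≤ _ := Finset.sum_le_sum fun k _ => by
        rw [measureReal_preimage_inter_preimage (hL k)]
        gcongr
        exact measureReal_union_le _ _

end PairPreimage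

theorem measurableSet_iInter_preimage {ι V W : Type*} [Countable ι]
    [NormedAddCommGroup V] [NormedSpace ℝ V] [FiniteDimensional ℝ V] [MeasurableSpace V]
    [BorelSpace V] [NormedAddCommGroup W] [NormedSpace ℝ W] [MeasurableSpace W] [BorelSpace W]
    (L : ι → V →ₗ[ℝ] W) {E : ι → Set W} (hE : ∀ i, MeasurableSet (E i)) :
    MeasurableSet (⋂ i, L i ⁻¹' E i) :=
  .iInter fun i => (hE i).preimage (L i).continuous_of_finiteDimensional.measurable

theorem lam_eq_measureReal (L : Fin 4 → R4 →ₗ[ℝ] R2) {E : Fin 4 → Set R2}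
    (hE : ∀ i, MeasurableSet (E i)) :
    Lam L E = volume.real (⋂ i, L i ⁻¹' E i) := by
  rw [Lam, ← integral_indicator_one (measurableSet_iInter_preimage L hE)]
  congr 1 with z
  classical
  simp only [indicator_apply, mem_iInter, mem_preimage, Finset.prod_boole, Finset.mem_univ,
    true_implies, Pi.one_apply]

theorem lam_locally_lipschitz_general (L : Fin 4 → R4 →ₗ[ℝ] R2)
    (hnd : ∀ i j, i ≠ j → Function.Bijective (fun z : R4 => (L i z, L j z))) :
    ∃ C : ℝ, 0 ≤ C ∧ ∀ E E' : Fin 4 → Set R2,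
      (∀ i, MeasurableSet (E i)) → (∀ i, volume (E i) < ⊤) →
      (∀ i, MeasurableSet (E' i)) → (∀ i, volume (E' i) < ⊤) →
      |Lam L E - Lam L E'| ≤
        C * ((⨆ i, (volume (E i)).toReal) + ⨆ j, (volume (E' j)).toReal) *
          ⨆ k, (volume (symmDiff (E k) (E' k))).toReal := by
  have hsucc : ∀ k : Fin 4, k ≠ k + 1 := by decide
  refine ⟨∑ k, |(LinearMap.det ((L k).prod (L (k + 1))))⁻¹|, by positivity, ?_⟩
  intro E E' hE hEfin hE' hE'fin
  simp only [← measureReal_def]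
  set a := ⨆ i, volume.real (E i)
  set b := ⨆ i, volume.real (E' i)
  set m := ⨆ k, volume.real (E k ∆ E' k)
  have hle (f : Fin 4 → ℝ) (i : Fin 4) : f i ≤ ⨆ j, f j :=
    le_ciSup (Set.finite_range f).bddAbove i
  have hS := volume_iInter_preimage_lt_top (hnd 0 1 (by decide)) (hEfin 0) (hEfin 1)
  have hS' := volume_iInter_preimage_lt_top (hnd 0 1 (by decide)) (hE'fin 0) (hE'fin 1)
  rw [lam_eq_measureReal L hE, lam_eq_measureReal L hE']
  calc _ ≤ _ := abs_measureReal_sub_le_measureReal_symmDiff'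
        (measurableSet_iInter_preimage L hE).nullMeasurableSet
        (measurableSet_iInter_preimage L hE').nullMeasurableSet hS.ne hS'.ne
    _ ≤ _ := measureReal_symmDiff_iInter_preimage_le (· + 1) (fun k => hnd _ _ (hsucc k))
        hEfin hE'fin
    _ ≤ ∑ k, |(LinearMap.det ((L k).prod (L (k + 1))))⁻¹| * (m * (a + b)) := by
        gcongr with k
        · exact measureReal_nonneg.trans (hle (fun k => volume.real (E k ∆ E' k)) 0)
        · exact hle (fun k => volume.real (E k ∆ E' k)) k
        · exact hle (fun i => volume.real (E i)) (k + 1)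
        · exact hle (fun i => volume.real (E' i)) (k + 1)
    _ = _ := by rw [← Finset.sum_mul]; ring

/-- Λ is locally Lipschitz in the sets:
|Λ(E) − Λ(E')| ≤ C (maxᵢ|Eᵢ| + maxⱼ|E'ⱼ|) maxₖ|Eₖ Δ E'ₖ|. -/
theorem lam_locally_lipschitz (L : Fin 4 → R4 →ₗ[ℝ] R2)
    (hsurj : ∀ i, Function.Surjective (L i))
    (hnd : ∀ i j, i ≠ j → Function.Bijective (fun z : R4 => (L i z, L j z))) :
    ∃ C : ℝ, 0 ≤ C ∧ ∀ E E' : Fin 4 → Set R2,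
      (∀ i, MeasurableSet (E i)) → (∀ i, volume (E i) < ⊤) →
      (∀ i, MeasurableSet (E' i)) → (∀ i, volume (E' i) < ⊤) →
      |Lam L E - Lam L E'| ≤
        C * ((⨆ i, (volume (E i)).toReal) + ⨆ j, (volume (E' j)).toReal) *
          ⨆ k, (volume (symmDiff (E k) (E' k))).toReal :=
  lam_locally_lipschitz_general L hnd

end
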